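/- Let A be a zero-dimensional Gorenstein local ring and r ≥ 0 an integer. Suppose given a commutative diagram of A-modules with exact rows 0 → N → M → F and 0 → N' → M' → F', where F and F' are free A-modules of rank s ≤ r, together with vertical maps N → N', M → M', F → F' making the diagram commute. Then the square formed by the horizontal maps ⋂^r_A M → (⋂^{r−s}_A N) ⊗_A det(F) and ⋂^r_A M' → (⋂^{r−s}_A N') ⊗_A det(F') of Definition 2.3, and the vertical maps induced by N → N', M → M' and F → F', commutes. -/
import Mathlib


open ExteriorAlgebra Module TensorProduct

/-- The map induced by a linear map `f : M →ₗ[R] N` on `n`-th exterior powers. -/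
noncomputable def expMap {R : Type*} [CommRing R] {M N : Type*} [AddCommGroup M] [Module R M]
    [AddCommGroup N] [Module R N] (n : ℕ) (f : M →ₗ[R] N) :
    ⋀[R]^n M →ₗ[R] ⋀[R]^n N :=
  (ExteriorAlgebra.map f).toLinearMap.restrict (p := ⋀[R]^n M) (q := ⋀[R]^n N)
    (by
      intro x hx
      rw [← ExteriorAlgebra.ιMulti_span_fixedDegree] at hx
      induction hx using Submodule.span_induction with
      | mem y hy =>
          obtain ⟨v, rfl⟩ := hy
          show ExteriorAlgebra.map f (ExteriorAlgebra.ιMulti R n v) ∈ _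
          rw [ExteriorAlgebra.map_apply_ιMulti]
          exact ExteriorAlgebra.ιMulti_range R n (Set.mem_range_self _)
      | zero => simp
      | add y z _ _ hy hz => simpa [map_add] using Submodule.add_mem _ hy hz
      | smul a y _ hy => simpa [map_smul] using Submodule.smul_mem _ a hy)

/-- The `n`-th exterior bidual `⋂^n_A M := Hom_A(⋀^n_A M^*, A)` of a module `M`. -/
abbrev ExtBidual (A : Type*) [CommRing A] (n : ℕ) (M : Type*) [AddCommGroup M] [Module A M] :=
  Module.Dual A (⋀[A]^n (Module.Dual A M))

/-- The map `⋂^n_A M → ⋂^n_A M'` functorially induced by `f : M →ₗ[A] M'` (dualize twice). -/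
noncomputable def extBidualMap {A : Type*} [CommRing A] {M M' : Type*} [AddCommGroup M]
    [Module A M] [AddCommGroup M'] [Module A M'] (n : ℕ) (f : M →ₗ[A] M') :
    ExtBidual A n M →ₗ[A] ExtBidual A n M' :=
  (expMap n f.dualMap).dualMap

section Aux
variable {R : Type*} [CommRing R] {M N P : Type*} [AddCommGroup M] [Module R M]
    [AddCommGroup N] [Module R N] [AddCommGroup P] [Module R P]

lemma expMap_coe (n : ℕ) (f : M →ₗ[R] N) (x : ⋀[R]^n M) :
    (expMap n f x : ExteriorAlgebra R N) = ExteriorAlgebra.map f (x : ExteriorAlgebra R M) :=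
  rfl

lemma expMap_comp_apply (n : ℕ) (f : M →ₗ[R] N) (g : N →ₗ[R] P) (x : ⋀[R]^n M) :
    expMap n (g ∘ₗ f) x = expMap n g (expMap n f x) := by
  apply Subtype.ext
  simp only [expMap_coe, ← ExteriorAlgebra.map_comp_map, AlgHom.comp_apply]

lemma expMap_surjective (n : ℕ) {f : M →ₗ[R] N} (hf : Function.Surjective f) :
    Function.Surjective (expMap n f) := by
  rw [← LinearMap.range_eq_top]
  have h : Submodule.map (⋀[R]^n N).subtype (LinearMap.range (expMap n f)) = ⋀[R]^n N := by
    apply le_antisymm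
    · rintro _ ⟨y, -, rfl⟩; exact y.2
    · conv_lhs => rw [← ExteriorAlgebra.ιMulti_span_fixedDegree]
      rw [Submodule.span_le]
      rintro _ ⟨v, rfl⟩
      choose w hw using fun i => hf (v i)
      refine ⟨expMap n f ⟨ExteriorAlgebra.ιMulti R n w,
        ExteriorAlgebra.ιMulti_range R n (Set.mem_range_self _)⟩, ⟨_, rfl⟩, ?_⟩
      simp only [Submodule.coe_subtype, expMap_coe, ExteriorAlgebra.map_apply_ιMulti]
      congr 1
      ext i
      exact hw i
  have := congrArg (Submodule.comap (⋀[R]^n N).subtype) h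
  rwa [Submodule.comap_map_eq_of_injective (Submodule.injective_subtype _),
    Submodule.comap_subtype_self] at this

lemma alt_map_basis {s : ℕ} (f : M [⋀^Fin s]→ₗ[R] N) (e : Basis (Fin s) R M)
    (v : Fin s → M) : f v = e.det v • f e := by
  have hf : f = (LinearMap.toSpanSingleton R N (f e)).compAlternatingMap e.det := by
    refine Basis.ext_alternating e fun i h => ?_
    let σ : Equiv.Perm (Fin s) := Equiv.ofBijective i (Finite.injective_iff_bijective.1 h)
    have h1 : (fun j => e (i j)) = e ∘ σ := rfl
    rw [h1, f.map_perm]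
    simp only [LinearMap.compAlternatingMap_apply, LinearMap.toSpanSingleton_apply]
    rw [e.det.map_perm]
    simp [Basis.det_self]
  conv_lhs => rw [hf]
  simp [Basis.det_self, LinearMap.toSpanSingleton_apply]

lemma dualMap_surjective {A : Type*} [CommRing A] [Module.Injective A A]
    {M N : Type*} [AddCommGroup M] [Module A M] [AddCommGroup N] [Module A N]
    {f : M →ₗ[A] N} (hf : Function.Injective f) :
    Function.Surjective f.dualMap := by
  intro g
  obtain ⟨h, hh⟩ := Module.Injective.extension_property A A M N f hf g
  exact ⟨h, hh⟩

end Aux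

section Aux2
variable {R : Type*} [CommRing R] {M : Type*} [AddCommGroup M] [Module R M]

lemma coord_matrix_det {s : ℕ} (e : Basis (Fin s) R M) :
    Matrix.det (Matrix.of fun i j => e.coord i (e j)) = 1 := by
  have h : (Matrix.of fun i j => e.coord i (e j)) = 1 := by
    ext i j
    simp [Basis.coord_apply, Basis.repr_self, Matrix.one_apply, Finsupp.single_apply, eq_comm]
  rw [h, Matrix.det_one]

lemma mul_mem_exteriorPower {a b c : ℕ} (h : a + b = c) {x y : ExteriorAlgebra R M}
    (hx : x ∈ ⋀[R]^a M) (hy : y ∈ ⋀[R]^b M) : x * y ∈ ⋀[R]^c M := by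
  subst h
  rw [exteriorPower, pow_add]
  exact Submodule.mul_mem_mul hx hy

lemma dualBasis_det_eq {s : ℕ} {F F' : Type*} [AddCommGroup F] [Module R F]
    [AddCommGroup F'] [Module R F'] (bF : Basis (Fin s) R F) (bF' : Basis (Fin s) R F')
    (fF : F →ₗ[R] F') :
    bF.dualBasis.det (fun i => fF.dualMap (bF'.coord i)) = bF'.det (fun j => fF (bF j)) := by
  rw [Basis.det_apply, Basis.det_apply, ← Matrix.det_transpose (bF'.toMatrix _)]
  congr 1
  ext i j
  simp [Basis.toMatrix_apply, Matrix.transpose_apply, Basis.coord_apply]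

end Aux2

set_option maxHeartbeats 1000000 in
/-- Proposition 2.5.  Let `A` be a zero-dimensional Gorenstein local ring.
Given a commutative diagram of `A`-modules with exact rows `0 → N →ι M →p F` and
`0 → N' →ι' M' →p' F'`, where `F`, `F'` are free of rank `s ≤ r`, and vertical maps
`nN : N → N'`, `mM : M → M'`, `fF : F → F'`, the square formed by the horizontal maps
`Ψ : ⋂^r M → ⋂^{r-s} N ⊗ det F` and `Ψ' : ⋂^r M' → ⋂^{r-s} N' ⊗ det F'` of Definition 2.3 and
the vertical maps induced by `nN`, `mM`, `fF` commutes.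

Here `Ψ` is characterized (as in Definition 2.3) by: for every `x ∈ ⋂^r M` and every
`d = d₁ ∧ ⋯ ∧ d_s ∈ ⋀^s F^*`, writing `Ψ x = u ⊗ (b₁ ∧ ⋯ ∧ b_s)` with `b` the chosen basis of
`F`, contracting the `det F` factor against `d` (which multiplies `u` by `det (dᵢ (bⱼ))`)
yields the functional `⋀^{r-s} N^* → A` sending `(⋀^{r-s} ι^*) z` to `x (z ∧ (⋀^s p^*) d)`. -/
theorem stark_systems_stmt3 (A : Type*) [CommRing A] [IsArtinianRing A] [IsLocalRing A]
    [Module.Injective A A]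
    (N M F N' M' F' : Type*)
    [AddCommGroup N] [Module A N] [AddCommGroup M] [Module A M] [AddCommGroup F] [Module A F]
    [AddCommGroup N'] [Module A N'] [AddCommGroup M'] [Module A M']
    [AddCommGroup F'] [Module A F']
    (s r : ℕ) (hsr : s ≤ r) (bF : Basis (Fin s) A F) (bF' : Basis (Fin s) A F')
    (ι : N →ₗ[A] M) (p : M →ₗ[A] F) (ι' : N' →ₗ[A] M') (p' : M' →ₗ[A] F')
    (hinj : Function.Injective ι) (hexact : Function.Exact ι p)
    (hinj' : Function.Injective ι') (hexact' : Function.Exact ι' p')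
    (nN : N →ₗ[A] N') (mM : M →ₗ[A] M') (fF : F →ₗ[A] F')
    (hcomm₁ : mM ∘ₗ ι = ι' ∘ₗ nN) (hcomm₂ : fF ∘ₗ p = p' ∘ₗ mM)
    (Ψ : ExtBidual A r M →ₗ[A] (ExtBidual A (r - s) N) ⊗[A] (⋀[A]^s F))
    (hΨ : ∀ (x : ExtBidual A r M) (d : Fin s → Module.Dual A F) (wd : ⋀[A]^s (Module.Dual A F)),
      (wd : ExteriorAlgebra A (Module.Dual A F)) = ExteriorAlgebra.ιMulti A s d →
      ∃ u : ExtBidual A (r - s) N,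
        Ψ x = u ⊗ₜ[A]
            (⟨ExteriorAlgebra.ιMulti A s (fun i => bF i),
              ExteriorAlgebra.ιMulti_range A s (Set.mem_range_self _)⟩ : ⋀[A]^s F) ∧
        ∀ (z : ⋀[A]^(r - s) (Module.Dual A M)) (zc : ⋀[A]^r (Module.Dual A M)),
          (zc : ExteriorAlgebra A (Module.Dual A M)) =
              (z : ExteriorAlgebra A (Module.Dual A M)) *
                ((expMap s p.dualMap wd : ⋀[A]^s (Module.Dual A M)) :
                  ExteriorAlgebra A (Module.Dual A M)) →
          (Matrix.det (Matrix.of fun i j => d i (bF j))) •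
              (u (expMap (r - s) ι.dualMap z)) = x zc)
    (Ψ' : ExtBidual A r M' →ₗ[A] (ExtBidual A (r - s) N') ⊗[A] (⋀[A]^s F'))
    (hΨ' : ∀ (x : ExtBidual A r M') (d : Fin s → Module.Dual A F')
        (wd : ⋀[A]^s (Module.Dual A F')),
      (wd : ExteriorAlgebra A (Module.Dual A F')) = ExteriorAlgebra.ιMulti A s d →
      ∃ u : ExtBidual A (r - s) N',
        Ψ' x = u ⊗ₜ[A]
            (⟨ExteriorAlgebra.ιMulti A s (fun i => bF' i),
              ExteriorAlgebra.ιMulti_range A s (Set.mem_range_self _)⟩ : ⋀[A]^s F') ∧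
        ∀ (z : ⋀[A]^(r - s) (Module.Dual A M')) (zc : ⋀[A]^r (Module.Dual A M')),
          (zc : ExteriorAlgebra A (Module.Dual A M')) =
              (z : ExteriorAlgebra A (Module.Dual A M')) *
                ((expMap s p'.dualMap wd : ⋀[A]^s (Module.Dual A M')) :
                  ExteriorAlgebra A (Module.Dual A M')) →
          (Matrix.det (Matrix.of fun i j => d i (bF' j))) •
              (u (expMap (r - s) ι'.dualMap z)) = x zc) :
    (TensorProduct.map (extBidualMap (r - s) nN) (expMap s fF)) ∘ₗ Ψ =
      Ψ' ∘ₗ (extBidualMap r mM) := by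
  apply LinearMap.ext
  intro x
  -- dual bases and the distinguished wedges
  set d : Fin s → Module.Dual A F := fun i => bF.coord i with hd
  set d' : Fin s → Module.Dual A F' := fun i => bF'.coord i with hd'
  set wd : ⋀[A]^s (Module.Dual A F) :=
    ⟨ExteriorAlgebra.ιMulti A s d, ExteriorAlgebra.ιMulti_range A s (Set.mem_range_self _)⟩
    with hwd
  set wd' : ⋀[A]^s (Module.Dual A F') :=
    ⟨ExteriorAlgebra.ιMulti A s d', ExteriorAlgebra.ιMulti_range A s (Set.mem_range_self _)⟩
    with hwd'
  obtain ⟨u, hu1, hu2⟩ := hΨ x d wd rfl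
  obtain ⟨u', hu1', hu2'⟩ := hΨ' (extBidualMap r mM x) d' wd' rfl
  have hdet1 : Matrix.det (Matrix.of fun i j => d i (bF j)) = 1 := coord_matrix_det bF
  have hdet1' : Matrix.det (Matrix.of fun i j => d' i (bF' j)) = 1 := coord_matrix_det bF'
  set δ : A := bF'.det (fun j => fF (bF j)) with hδ
  set bTop : ⋀[A]^s F :=
    ⟨ExteriorAlgebra.ιMulti A s (fun i => bF i),
      ExteriorAlgebra.ιMulti_range A s (Set.mem_range_self _)⟩ with hbTop
  set bTop' : ⋀[A]^s F' :=
    ⟨ExteriorAlgebra.ιMulti A s (fun i => bF' i),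
      ExteriorAlgebra.ιMulti_range A s (Set.mem_range_self _)⟩ with hbTop'
  -- Step A: expMap s fF bTop = δ • bTop'
  have hA : expMap s fF bTop = δ • bTop' := by
    apply Subtype.ext
    rw [Submodule.coe_smul]
    rw [hbTop, hbTop']
    show ExteriorAlgebra.map fF (ExteriorAlgebra.ιMulti A s (fun i => bF i)) =
      δ • ExteriorAlgebra.ιMulti A s (fun i => bF' i)
    rw [ExteriorAlgebra.map_apply_ιMulti]
    have := alt_map_basis (ExteriorAlgebra.ιMulti A s (M := F')) bF' (fF ∘ fun i => bF i)
    rw [this, hδ]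
    rfl
  -- Key claim
  have key : δ • (extBidualMap (r - s) nN u) = u' := by
    apply LinearMap.ext
    intro w'
    obtain ⟨z', rfl⟩ := expMap_surjective (r - s) (dualMap_surjective hinj') w'
    -- the element z
    set z : ⋀[A]^(r - s) (Module.Dual A M) := expMap (r - s) mM.dualMap z' with hz
    set zc : ⋀[A]^r (Module.Dual A M) :=
      ⟨(z : ExteriorAlgebra A (Module.Dual A M)) *
        ((expMap s p.dualMap wd : ⋀[A]^s (Module.Dual A M)) :
          ExteriorAlgebra A (Module.Dual A M)),
        mul_mem_exteriorPower (Nat.sub_add_cancel hsr) z.2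
          (expMap s p.dualMap wd).2⟩ with hzc
    set zc' : ⋀[A]^r (Module.Dual A M') :=
      ⟨(z' : ExteriorAlgebra A (Module.Dual A M')) *
        ((expMap s p'.dualMap wd' : ⋀[A]^s (Module.Dual A M')) :
          ExteriorAlgebra A (Module.Dual A M')),
        mul_mem_exteriorPower (Nat.sub_add_cancel hsr) z'.2
          (expMap s p'.dualMap wd').2⟩ with hzc'
    have h2 := hu2 z zc rfl
    rw [hdet1, one_smul] at h2
    have h2' := hu2' z' zc' rfl
    rw [hdet1', one_smul] at h2'
    -- simplify LHS
    have hcompdual : nN.dualMap ∘ₗ ι'.dualMap = ι.dualMap ∘ₗ mM.dualMap := by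
      rw [LinearMap.dualMap_comp_dualMap, LinearMap.dualMap_comp_dualMap, hcomm₁]
    have hLHS : (δ • (extBidualMap (r - s) nN u)) (expMap (r - s) ι'.dualMap z')
        = δ • u (expMap (r - s) ι.dualMap z) := by
      rw [LinearMap.smul_apply]
      congr 1
      show u (expMap (r - s) nN.dualMap (expMap (r - s) ι'.dualMap z')) = _
      rw [← expMap_comp_apply, hcompdual, expMap_comp_apply]
    rw [hLHS, h2, h2']
    -- simplify RHS: (extBidualMap r mM x) zc' = x (expMap r mM.dualMap zc')
    show δ • x zc = x (expMap r mM.dualMap zc')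
    have hzckey : expMap r mM.dualMap zc' = δ • zc := by
      apply Subtype.ext
      rw [Submodule.coe_smul]
      rw [expMap_coe, hzc', hzc]
      rw [map_mul]
      have hfac1 : ExteriorAlgebra.map mM.dualMap (z' : ExteriorAlgebra A (Module.Dual A M'))
          = (z : ExteriorAlgebra A (Module.Dual A M)) := rfl
      have hfac2 : ExteriorAlgebra.map mM.dualMap
          ((expMap s p'.dualMap wd' : ⋀[A]^s (Module.Dual A M')) :
            ExteriorAlgebra A (Module.Dual A M'))
          = δ • ((expMap s p.dualMap wd : ⋀[A]^s (Module.Dual A M)) :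
            ExteriorAlgebra A (Module.Dual A M)) := by
        rw [expMap_coe, expMap_coe]
        rw [← AlgHom.comp_apply, ExteriorAlgebra.map_comp_map,
          LinearMap.dualMap_comp_dualMap, ← hcomm₂, ← LinearMap.dualMap_comp_dualMap,
          ← ExteriorAlgebra.map_comp_map, AlgHom.comp_apply]
        rw [hwd', hwd]
        show ExteriorAlgebra.map p.dualMap (ExteriorAlgebra.map fF.dualMap
          (ExteriorAlgebra.ιMulti A s d')) = δ • ExteriorAlgebra.map p.dualMap
          (ExteriorAlgebra.ιMulti A s d)
        rw [ExteriorAlgebra.map_apply_ιMulti]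
        have hb := alt_map_basis (ExteriorAlgebra.ιMulti A s (M := Module.Dual A F))
          bF.dualBasis (fF.dualMap ∘ d')
        rw [hb]
        have hδ2 : bF.dualBasis.det (fF.dualMap ∘ d') = δ := by
          rw [hδ, ← dualBasis_det_eq bF bF' fF]
          rfl
        have hdb : ⇑bF.dualBasis = d := by
          funext i
          rw [Basis.coe_dualBasis]
        rw [hδ2, hdb, map_smul]
      rw [hfac1, hfac2, mul_smul_comm]
    rw [hzckey, map_smul]
  -- conclude
  show (TensorProduct.map (extBidualMap (r - s) nN) (expMap s fF)) (Ψ x)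
    = Ψ' (extBidualMap r mM x)
  rw [hu1, hu1', TensorProduct.map_tmul]
  rw [hA, tmul_smul, smul_tmul', key]
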